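/- Let the signature contain an absorption pair (f, ε_f), a binary symbol g, a unary symbol h, and a constant a (all distinct from ε_f and from each other), and let u1, u2, v1, v2 be pairwise distinct variables. Then the four linear terms g(f(u1,a), f(u2,h(ε_f))), g(f(u1,a), f(a,v2)), g(f(h(ε_f),v1), f(u2,h(ε_f))), and g(f(h(ε_f),v1), f(a,v2)) form a minimal complete set of linear Abs-generalizations of g(ε_f, f(a, h(ε_f))) and g(f(h(ε_f), a), ε_f): each of them is a linear Abs-generalization of these two terms, every linear Abs-generalization of these two terms is ≲_Abs one of the four, and no two distinct terms among the four are comparable under ≲_Abs. -/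

import Mathlib

/- Common development: first-order terms, absorption theories, anti-unification
   equations, configurations and the AUnif transformation rules. -/

namespace AbsAU

/-- First-order terms over a set `F` of function symbols, with variables drawn
from the countably infinite set `ℕ`. -/
inductive Tm (F : Type) : Type where
  | var : ℕ → Tm F
  | app : F → List (Tm F) → Tm F

namespace Tm

variable {F : Type}

/-- Application of a substitution (given as a total map on variables) to a term. -/
def subst (σ : ℕ → Tm F) : Tm F → Tm F
  | var x => σ x
  | app f ts => app f (ts.attach.map fun t => subst σ t.1)
decreasing_by
  have := List.sizeOf_lt_of_mem t.2
  simp only [Tm.app.sizeOf_spec]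
  omega

/-- The head of a term: a variable or a function symbol. -/
def head : Tm F → ℕ ⊕ F
  | var x => Sum.inl x
  | app f _ => Sum.inr f

end Tm

/-- `VarIn x t` holds iff the variable `x` occurs in the term `t`. -/
inductive VarIn {F : Type} : ℕ → Tm F → Prop where
  | var (x : ℕ) : VarIn x (.var x)
  | app {x : ℕ} {t : Tm F} (f : F) {ts : List (Tm F)} :
      t ∈ ts → VarIn x t → VarIn x (.app f ts)

/-- `SymOcc f t` holds iff the function symbol `f` occurs in the term `t`. -/
inductive SymOcc {F : Type} (f : F) : Tm F → Prop where
  | head (ts : List (Tm F)) : SymOcc f (.app f ts)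
  | arg {t : Tm F} (g : F) {ts : List (Tm F)} :
      t ∈ ts → SymOcc f t → SymOcc f (.app g ts)

/-- Signature data: an arity for every symbol and the distinguished wild card
constant `⋆`. -/
structure AbsSig (F : Type) where
  arity : F → ℕ
  star : F
  star_arity : arity star = 0

/-- Arity-respecting (well-formed) terms. -/
inductive WFT {F : Type} (Sg : AbsSig F) : Tm F → Prop where
  | var (x : ℕ) : WFT Sg (.var x)
  | app {f : F} {ts : List (Tm F)} :
      ts.length = Sg.arity f → (∀ t ∈ ts, WFT Sg t) → WFT Sg (.app f ts)

/-- An absorption theory: finitely many pairs `(f, ε_f)` of a binary symbol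
together with its absorption constant, all chosen symbols pairwise distinct and
distinct from the wild card. -/
structure AbsTh {F : Type} (Sg : AbsSig F) where
  pairs : Set (F × F)
  finite : pairs.Finite
  binary : ∀ p ∈ pairs, Sg.arity p.1 = 2
  constZ : ∀ p ∈ pairs, Sg.arity p.2 = 0
  distinct : ∀ p ∈ pairs, ∀ q ∈ pairs, p ≠ q →
      p.1 ≠ q.1 ∧ p.1 ≠ q.2 ∧ p.2 ≠ q.1 ∧ p.2 ≠ q.2
  ne : ∀ p ∈ pairs, p.1 ≠ p.2
  star_ne : ∀ p ∈ pairs, Sg.star ≠ p.1 ∧ Sg.star ≠ p.2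

variable {F : Type}

/-- `≈_Abs` : the least congruence on terms containing all substitution
instances of the absorption axioms `f(ε_f, x) ≈ ε_f` and `f(x, ε_f) ≈ ε_f`. -/
inductive AbsEq {Sg : AbsSig F} (Th : AbsTh Sg) : Tm F → Tm F → Prop where
  | absL {f e : F} (t : Tm F) : (f, e) ∈ Th.pairs →
      AbsEq Th (.app f [.app e [], t]) (.app e [])
  | absR {f e : F} (t : Tm F) : (f, e) ∈ Th.pairs →
      AbsEq Th (.app f [t, .app e []]) (.app e [])
  | refl (t : Tm F) : AbsEq Th t t
  | symm {s t : Tm F} : AbsEq Th s t → AbsEq Th t s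
  | trans {s t u : Tm F} : AbsEq Th s t → AbsEq Th t u → AbsEq Th s u
  | congr (f : F) {ss ts : List (Tm F)} :
      List.Forall₂ (AbsEq Th) ss ts → AbsEq Th (.app f ss) (.app f ts)

/-- The domain of a substitution. -/
def Dom (σ : ℕ → Tm F) : Set ℕ := {x | σ x ≠ .var x}

/-- A substitution proper has a finite domain. -/
def FinDom (σ : ℕ → Tm F) : Prop := (Dom σ).Finite

/-- The variables occurring in the range of a substitution. -/
def Rvar (σ : ℕ → Tm F) : Set ℕ := {y | ∃ x ∈ Dom σ, VarIn y (σ x)}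

/-- `r ≲_Abs s` : `r` is more general than `s` modulo the absorption theory. -/
def MoreGen {Sg : AbsSig F} (Th : AbsTh Sg) (r s : Tm F) : Prop :=
  ∃ σ : ℕ → Tm F, FinDom σ ∧ AbsEq Th (r.subst σ) s

/-- `r` is an `Abs`-generalization of `s` and `t`. -/
def Gen {Sg : AbsSig F} (Th : AbsTh Sg) (r s t : Tm F) : Prop :=
  MoreGen Th r s ∧ MoreGen Th r t

/-- The set of all `Abs`-generalizations of `s` and `t`. -/
def GAbs {Sg : AbsSig F} (Th : AbsTh Sg) (s t : Tm F) : Set (Tm F) :=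
  {r | Gen Th r s t}

/-- `M` is a minimal complete set of `Abs`-generalizations of `s` and `t`. -/
def IsMCSG {Sg : AbsSig F} (Th : AbsTh Sg) (M : Set (Tm F)) (s t : Tm F) : Prop :=
  M ⊆ GAbs Th s t ∧
  (∀ r ∈ GAbs Th s t, ∃ r' ∈ M, MoreGen Th r r') ∧
  (∀ r ∈ M, ∀ r' ∈ M, MoreGen Th r r' → r = r')

/-- `Abs`-normal forms: no absorption constant occurs as an argument of its
absorption symbol. -/
inductive NF {Sg : AbsSig F} (Th : AbsTh Sg) : Tm F → Prop where
  | var (x : ℕ) : NF Th (.var x)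
  | app {f : F} {ts : List (Tm F)} :
      (∀ t ∈ ts, NF Th t) →
      (∀ e : F, (f, e) ∈ Th.pairs → Tm.app e [] ∉ ts) →
      NF Th (.app f ts)

/-- An anti-unification equation (AUE) `lhs ≜_lab rhs`. -/
structure AUE (F : Type) where
  lhs : Tm F
  lab : ℕ
  rhs : Tm F

/-- The labels of a set of AUEs. -/
def labels (W : Set (AUE F)) : Set ℕ := AUE.lab '' W

/-- A set of AUEs is valid if its labels are pairwise distinct. -/
def ValidAUEs (W : Set (AUE F)) : Prop :=
  ∀ a ∈ W, ∀ b ∈ W, a.lab = b.lab → a = b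

/-- The wild card, as a term. -/
def starTm (Sg : AbsSig F) : Tm F := .app Sg.star []

/-- A wild AUE has the wild card on one of its sides. -/
def WildAUE (Sg : AbsSig F) (a : AUE F) : Prop :=
  a.lhs = starTm Sg ∨ a.rhs = starTm Sg

/-- The heads of `s` and `t` form a related absorption pair. -/
def RelatedAbs {Sg : AbsSig F} (Th : AbsTh Sg) (s t : Tm F) : Prop :=
  ∃ f e : F, (f, e) ∈ Th.pairs ∧
    ((s.head = Sum.inr f ∧ t.head = Sum.inr e) ∨
     (s.head = Sum.inr e ∧ t.head = Sum.inr f))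

/-- A solved AUE: distinct heads, no related absorption symbols, not wild. -/
def SolvedAUE {Sg : AbsSig F} (Th : AbsTh Sg) (a : AUE F) : Prop :=
  a.lhs.head ≠ a.rhs.head ∧ ¬ RelatedAbs Th a.lhs a.rhs ∧ ¬ WildAUE Sg a

/-- A proper object term appearing in an AUE of a configuration: in
`Abs`-normal form, arity-respecting, ground, and wild-card free. -/
def GoodTm {Sg : AbsSig F} (Th : AbsTh Sg) (t : Tm F) : Prop :=
  NF Th t ∧ WFT Sg t ∧ (∀ x : ℕ, ¬ VarIn x t) ∧ ¬ SymOcc Sg.star t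

/-- A configuration `⟨A; S; T; θ⟩`. -/
structure Config (F : Type) where
  A : Set (AUE F)
  S : Set (AUE F)
  T : Set (AUE F)
  θ : ℕ → Tm F

/-- The defining properties of configurations: `A`, `S`, `T` are (finite) valid
sets of unsolved, solved, resp. wild AUEs over object terms in `Abs`-normal
form, `θ` is a substitution, (i) the labels of `A`, `S`, `T` and the domain of
`θ` are pairwise disjoint, and (ii) the variables occurring in the range of `θ`
are exactly the labels of `A`, `S` and `T`. -/
structure IsConfig {Sg : AbsSig F} (Th : AbsTh Sg) (C : Config F) : Prop where
  finA : C.A.Finite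
  finS : C.S.Finite
  finT : C.T.Finite
  validA : ValidAUEs C.A
  validS : ValidAUEs C.S
  validT : ValidAUEs C.T
  goodA : ∀ a ∈ C.A, GoodTm Th a.lhs ∧ GoodTm Th a.rhs
  goodS : ∀ a ∈ C.S, GoodTm Th a.lhs ∧ GoodTm Th a.rhs
  solvedS : ∀ a ∈ C.S, SolvedAUE Th a
  wildT : ∀ a ∈ C.T,
      (a.lhs = starTm Sg ∧ GoodTm Th a.rhs) ∨
      (a.rhs = starTm Sg ∧ GoodTm Th a.lhs)
  finDom : FinDom C.θ
  nfθ : ∀ x : ℕ, NF Th (C.θ x) ∧ WFT Sg (C.θ x)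
  disjAS : Disjoint (labels C.A) (labels C.S)
  disjAT : Disjoint (labels C.A) (labels C.T)
  disjST : Disjoint (labels C.S) (labels C.T)
  disjAD : Disjoint (labels C.A) (Dom C.θ)
  disjSD : Disjoint (labels C.S) (Dom C.θ)
  disjTD : Disjoint (labels C.T) (Dom C.θ)
  rvarEq : Rvar C.θ = labels C.A ∪ labels C.S ∪ labels C.T

/-- The substitution `{x ↦ t}`. -/
def single (x : ℕ) (t : Tm F) : ℕ → Tm F :=
  fun z => if z = x then t else .var z

/-- Composition `θ{x ↦ t}` of a substitution with a single binding. -/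
def compOne (θ : ℕ → Tm F) (x : ℕ) (t : Tm F) : ℕ → Tm F :=
  fun z => (θ z).subst (single x t)

/-- A variable is fresh for a configuration. -/
def FreshIn (C : Config F) (y : ℕ) : Prop :=
  y ∉ labels C.A ∧ y ∉ labels C.S ∧ y ∉ labels C.T ∧
  y ∉ Dom C.θ ∧ y ∉ Rvar C.θ

/-- Canonical choice of the next fresh variable for a configuration. -/
noncomputable def nextFresh (C : Config F) : ℕ :=
  sInf {k : ℕ | ∀ m : ℕ, k ≤ m → FreshIn C m}

/-- The set of AUEs `{s₁ ≜_{y₁} t₁, …, sₙ ≜_{yₙ} tₙ}`. -/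
def zipAUEs (ss : List (Tm F)) (ys : List ℕ) (ts : List (Tm F)) : Set (AUE F) :=
  {a | ∃ (i : ℕ) (h1 : i < ss.length) (h2 : i < ys.length) (h3 : i < ts.length),
      a = ⟨ss.get ⟨i, h1⟩, ys.get ⟨i, h2⟩, ts.get ⟨i, h3⟩⟩}

/-- The AUnif transformation rules: Decompose, Solve, the four Expansion rules
for left/right absorption, and Merge. -/
inductive Step {Sg : AbsSig F} (Th : AbsTh Sg) : Config F → Config F → Prop where
  | dec (f : F) (ss ts : List (Tm F)) (x : ℕ) (ys : List ℕ)
      (A S T : Set (AUE F)) (θ : ℕ → Tm F)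
      (hlen : ss.length = ts.length)
      (hnotin : (⟨.app f ss, x, .app f ts⟩ : AUE F) ∉ A)
      (hys : ys = (List.range ss.length).map
          (fun i => nextFresh (⟨insert ⟨.app f ss, x, .app f ts⟩ A, S, T, θ⟩ : Config F) + i)) :
      Step Th ⟨insert ⟨.app f ss, x, .app f ts⟩ A, S, T, θ⟩
        ⟨zipAUEs ss ys ts ∪ A, S, T, compOne θ x (.app f (ys.map Tm.var))⟩
  | sol (a : AUE F) (A S T : Set (AUE F)) (θ : ℕ → Tm F)
      (hhead : a.lhs.head ≠ a.rhs.head)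
      (hrel : ¬ RelatedAbs Th a.lhs a.rhs)
      (hnotin : a ∉ A) :
      Step Th ⟨insert a A, S, T, θ⟩ ⟨A, insert a S, T, θ⟩
  | expLA1 (f e : F) (t1 t2 : Tm F) (x y1 y2 : ℕ)
      (A S T : Set (AUE F)) (θ : ℕ → Tm F)
      (hp : (f, e) ∈ Th.pairs)
      (hnotin : (⟨.app e [], x, .app f [t1, t2]⟩ : AUE F) ∉ A)
      (hy1 : y1 = nextFresh (⟨insert ⟨.app e [], x, .app f [t1, t2]⟩ A, S, T, θ⟩ : Config F))
      (hy2 : y2 = y1 + 1) :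
      Step Th ⟨insert ⟨.app e [], x, .app f [t1, t2]⟩ A, S, T, θ⟩
        ⟨insert ⟨.app e [], y1, t1⟩ A, S, insert ⟨starTm Sg, y2, t2⟩ T,
          compOne θ x (.app f [.var y1, .var y2])⟩
  | expLA2 (f e : F) (t1 t2 : Tm F) (x y1 y2 : ℕ)
      (A S T : Set (AUE F)) (θ : ℕ → Tm F)
      (hp : (f, e) ∈ Th.pairs)
      (hnotin : (⟨.app e [], x, .app f [t1, t2]⟩ : AUE F) ∉ A)
      (hy1 : y1 = nextFresh (⟨insert ⟨.app e [], x, .app f [t1, t2]⟩ A, S, T, θ⟩ : Config F))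
      (hy2 : y2 = y1 + 1) :
      Step Th ⟨insert ⟨.app e [], x, .app f [t1, t2]⟩ A, S, T, θ⟩
        ⟨insert ⟨.app e [], y2, t2⟩ A, S, insert ⟨starTm Sg, y1, t1⟩ T,
          compOne θ x (.app f [.var y1, .var y2])⟩
  | expRA1 (f e : F) (s1 s2 : Tm F) (x y1 y2 : ℕ)
      (A S T : Set (AUE F)) (θ : ℕ → Tm F)
      (hp : (f, e) ∈ Th.pairs)
      (hnotin : (⟨.app f [s1, s2], x, .app e []⟩ : AUE F) ∉ A)
      (hy1 : y1 = nextFresh (⟨insert ⟨.app f [s1, s2], x, .app e []⟩ A, S, T, θ⟩ : Config F))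
      (hy2 : y2 = y1 + 1) :
      Step Th ⟨insert ⟨.app f [s1, s2], x, .app e []⟩ A, S, T, θ⟩
        ⟨insert ⟨s1, y1, .app e []⟩ A, S, insert ⟨s2, y2, starTm Sg⟩ T,
          compOne θ x (.app f [.var y1, .var y2])⟩
  | expRA2 (f e : F) (s1 s2 : Tm F) (x y1 y2 : ℕ)
      (A S T : Set (AUE F)) (θ : ℕ → Tm F)
      (hp : (f, e) ∈ Th.pairs)
      (hnotin : (⟨.app f [s1, s2], x, .app e []⟩ : AUE F) ∉ A)
      (hy1 : y1 = nextFresh (⟨insert ⟨.app f [s1, s2], x, .app e []⟩ A, S, T, θ⟩ : Config F))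
      (hy2 : y2 = y1 + 1) :
      Step Th ⟨insert ⟨.app f [s1, s2], x, .app e []⟩ A, S, T, θ⟩
        ⟨insert ⟨s2, y2, .app e []⟩ A, S, insert ⟨s1, y1, starTm Sg⟩ T,
          compOne θ x (.app f [.var y1, .var y2])⟩
  | mer (s t : Tm F) (x y : ℕ) (S T : Set (AUE F)) (θ : ℕ → Tm F)
      (hxy : x ≠ y)
      (hx : (⟨s, x, t⟩ : AUE F) ∉ S) (hy : (⟨s, y, t⟩ : AUE F) ∉ S) :
      Step Th ⟨∅, insert ⟨s, x, t⟩ (insert ⟨s, y, t⟩ S), T, θ⟩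
        ⟨∅, insert ⟨s, y, t⟩ S, T, compOne θ x (.var y)⟩

/-- A final (normal) configuration: no rule applies. -/
def Final {Sg : AbsSig F} (Th : AbsTh Sg) (C : Config F) : Prop :=
  ∀ C' : Config F, ¬ Step Th C C'

/-- `AUnif(C)`: the set of final configurations reachable from `C`. -/
def AUnifSet {Sg : AbsSig F} (Th : AbsTh Sg) (C : Config F) : Set (Config F) :=
  {C' | Relation.ReflTransGen (Step Th) C C' ∧ Final Th C'}

open Classical in
/-- The left substitution `σ_W` associated with a set of AUEs. -/
noncomputable def sigmaW (W : Set (AUE F)) : ℕ → Tm F :=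
  fun y => if h : ∃ a, a ∈ W ∧ a.lab = y then h.choose.lhs else .var y

open Classical in
/-- The right substitution `ρ_W` associated with a set of AUEs. -/
noncomputable def rhoW (W : Set (AUE F)) : ℕ → Tm F :=
  fun y => if h : ∃ a, a ∈ W ∧ a.lab = y then h.choose.rhs else .var y

/-- The abstraction set `↑(t, σ)`. -/
def absSet {Sg : AbsSig F} (Th : AbsTh Sg) (t : Tm F) (σ : ℕ → Tm F) : Set (Tm F) :=
  {r | AbsEq Th (r.subst σ) t ∧ NF Th r ∧ ∀ x : ℕ, VarIn x r → x ∈ Dom σ}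

/-- `Ψ(T, S)`: the set of abstraction substitutions of a configuration with
abstraction `T` and store `S`. -/
def Psi {Sg : AbsSig F} (Th : AbsTh Sg) (T S : Set (AUE F)) : Set (ℕ → Tm F) :=
  {τ | Dom τ = labels T ∧ ∀ a ∈ T,
      (a.lhs = starTm Sg → τ a.lab ∈ absSet Th a.rhs (rhoW S)) ∧
      (a.rhs = starTm Sg → τ a.lab ∈ absSet Th a.lhs (sigmaW S))}

/-- The initial configuration `⟨{s ≜_x t}; ∅; ∅; ι⟩` with starting label `xst`
and starting substitution `ι = {xst ↦ x}`. -/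
def initConfig (s t : Tm F) (x xst : ℕ) : Config F :=
  ⟨{⟨s, x, t⟩}, ∅, ∅, single xst (.var x)⟩

/-- `AUnif(C₀)` is merged: identical solved AUEs in (possibly different) final
stores carry the same label, and equal labels carry identical AUEs. -/
def Merged {Sg : AbsSig F} (Th : AbsTh Sg) (C0 : Config F) : Prop :=
  ∀ C1 ∈ AUnifSet Th C0, ∀ C2 ∈ AUnifSet Th C0, ∀ a ∈ C1.S, ∀ b ∈ C2.S,
    ((a.lhs = b.lhs ∧ a.rhs = b.rhs) ↔ a.lab = b.lab)

/-- `C_AUnif(s, t)`: all generalizations computed from final configurations of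
the initial configuration for `s ≜_x t`, instantiated by abstraction
substitutions. -/
def CAUnif {Sg : AbsSig F} (Th : AbsTh Sg) (s t : Tm F) (x xst : ℕ) : Set (Tm F) :=
  {g | ∃ C' ∈ AUnifSet Th (initConfig s t x xst),
      ∃ τ ∈ Psi Th C'.T C'.S, g = (C'.θ x).subst τ}

/-- Linear terms: no variable occurs more than once. -/
inductive Linear {F : Type} : Tm F → Prop where
  | var (x : ℕ) : Linear (.var x)
  | app (f : F) {ts : List (Tm F)} :
      (∀ t ∈ ts, Linear t) →
      List.Pairwise (fun s t => ∀ x : ℕ, VarIn x s → ¬ VarIn x t) ts →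
      Linear (.app f ts)

/-!
`≈_Abs` is decided by innermost absorption normal forms. Under a rigid symbol such as `g`
nothing collapses, so a generalization of `g(s₁, s₂)` and `g(t₁, t₂)` is a variable or
`g(r₁, r₂)` with each `rᵢ` generalizing `sᵢ` and `tᵢ`. A linear `r₁` generalizing `ε_f` and
`f(h(ε_f), a)` is a variable or `f(l₁, l₂)` with some `lᵢ` absorbed in the first instance; since
`lᵢ` also instantiates to a rigid-headed term it must be a variable, and linearity lets the other
argument keep its own instance, so `r₁ ≲ f(u₁, a)` or `r₁ ≲ f(h(ε_f), v₁)`. The same holds for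
`r₂`. The four terms are incomparable because an `f`-term whose arguments are not absorbed keeps
them in normal form, and a term with a function symbol at its head never instantiates to a
variable.
-/

namespace Tm

@[elab_as_elim]
theorem induction {motive : Tm F → Prop} (var : ∀ x, motive (.var x))
    (app : ∀ k ls, (∀ t ∈ ls, motive t) → motive (.app k ls)) : ∀ t, motive t
  | .var x => var x
  | .app k ls => app k ls fun t _ => induction var app t
decreasing_by
  have := List.sizeOf_lt_of_mem ‹t ∈ ls›
  simp only [Tm.app.sizeOf_spec]
  omega

@[simp] theorem subst_var (σ : ℕ → Tm F) (x : ℕ) : (var x).subst σ = σ x := by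
  rw [subst]

@[simp] theorem subst_app (σ : ℕ → Tm F) (k : F) (ls : List (Tm F)) :
    (app k ls).subst σ = app k (ls.map (subst σ)) := by
  rw [subst, List.map_attach_eq_pmap, List.pmap_eq_map]

@[simp] theorem subst_var_eq (t : Tm F) : t.subst var = t := by
  induction t using Tm.induction with
  | var x => rw [subst_var]
  | app k ls ih =>
    rw [subst_app, (List.map_congr_left ih).trans (List.map_id ls)]

end Tm

open Tm

@[simp] theorem varIn_var_iff {z x : ℕ} : VarIn (F := F) z (.var x) ↔ z = x := by
  constructor
  · rintro ⟨⟩; rfl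
  · rintro rfl; exact .var z

@[simp] theorem varIn_app_iff {z : ℕ} {k : F} {ls : List (Tm F)} :
    VarIn z (.app k ls) ↔ ∃ t ∈ ls, VarIn z t := by
  constructor
  · rintro (_ | ⟨_, ht, hv⟩); exact ⟨_, ht, hv⟩
  · rintro ⟨t, ht, hv⟩; exact .app k ht hv

theorem subst_congr {σ σ' : ℕ → Tm F} {t : Tm F} (h : ∀ z, VarIn z t → σ z = σ' z) :
    t.subst σ = t.subst σ' := by
  induction t using Tm.induction with
  | var x => rw [subst_var, subst_var]; exact h x (.var x)
  | app k ls ih =>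
    rw [subst_app, subst_app,
      List.map_congr_left fun t ht => ih t ht fun z hz => h z (.app k ht hz)]

theorem finite_setOf_varIn (t : Tm F) : {z | VarIn z t}.Finite := by
  induction t using Tm.induction with
  | var x => simp
  | app k ls ih =>
    have : {z | VarIn z (.app k ls)} = ⋃ t ∈ ls, {z | VarIn z t} := by ext; simp
    rw [this]
    exact ls.finite_toSet.biUnion ih

theorem linear_app_iff {k : F} {ts : List (Tm F)} :
    Linear (.app k ts) ↔
      (∀ t ∈ ts, Linear t) ∧ ts.Pairwise (fun s t => ∀ z, VarIn z s → ¬ VarIn z t) := by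
  constructor
  · rintro (_ | ⟨_, hl, hp⟩); exact ⟨hl, hp⟩
  · rintro ⟨hl, hp⟩; exact .app k hl hp

theorem Linear.of_forall_not_varIn {t : Tm F} (ht : ∀ z, ¬ VarIn z t) : Linear t := by
  induction t using Tm.induction with
  | var x => exact absurd (.var x) (ht x)
  | app k ls ih =>
    refine linear_app_iff.2 ⟨fun t hmem => ih t hmem fun z hz => ht z (.app k hmem hz), ?_⟩
    exact List.pairwise_of_forall_mem_list fun s hs _ _ z hz => absurd (.app k hs hz) (ht z)

theorem linear_app_pair_iff {k : F} {s t : Tm F} :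
    Linear (.app k [s, t]) ↔ Linear s ∧ Linear t ∧ ∀ z, VarIn z s → ¬ VarIn z t := by
  simp [linear_app_iff, and_assoc]

section Normalization

variable {Sg : AbsSig F} (Th : AbsTh Sg)

theorem snd_eq_of_mem_pairs {k e₁ e₂ : F} (h₁ : (k, e₁) ∈ Th.pairs) (h₂ : (k, e₂) ∈ Th.pairs) :
    e₁ = e₂ := by
  by_contra hne
  exact (Th.distinct _ h₁ _ h₂ (by simp [hne])).1 rfl

theorem ne_snd_of_mem_pairs {k e : F} (hke : (k, e) ∈ Th.pairs) {p : F × F} (hp : p ∈ Th.pairs) :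
    k ≠ p.2 := by
  by_cases hpq : (k, e) = p
  · exact hpq ▸ Th.ne _ hke
  · exact (Th.distinct _ hke _ hp hpq).2.1

def Rigid (k : F) : Prop := ∀ p ∈ Th.pairs, k ≠ p.1 ∧ k ≠ p.2

open Classical in
noncomputable def collapse (k : F) (ls : List (Tm F)) : Tm F :=
  if h : ∃ e, (k, e) ∈ Th.pairs ∧ ∃ t, ls = [.app e [], t] ∨ ls = [t, .app e []]
  then .app h.choose [] else .app k ls

noncomputable def norm : Tm F → Tm F
  | .var x => .var x
  | .app k ls => collapse Th k (ls.attach.map fun t => norm t.1)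
decreasing_by
  have := List.sizeOf_lt_of_mem t.2
  simp only [Tm.app.sizeOf_spec]
  omega

variable {Th}

theorem collapse_of_absorbing {k e : F} (hke : (k, e) ∈ Th.pairs) {ls : List (Tm F)} {t : Tm F}
    (h : ls = [.app e [], t] ∨ ls = [t, .app e []]) : collapse Th k ls = .app e [] := by
  have hex : ∃ e, (k, e) ∈ Th.pairs ∧ ∃ t, ls = [.app e [], t] ∨ ls = [t, .app e []] :=
    ⟨e, hke, t, h⟩
  rw [collapse, dif_pos hex, snd_eq_of_mem_pairs Th hex.choose_spec.1 hke]

theorem collapse_cases (k : F) (ls : List (Tm F)) :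
    collapse Th k ls = .app k ls ∨
      ∃ e t, (k, e) ∈ Th.pairs ∧ (ls = [.app e [], t] ∨ ls = [t, .app e []]) ∧
        collapse Th k ls = .app e [] := by
  by_cases hex : ∃ e, (k, e) ∈ Th.pairs ∧ ∃ t, ls = [.app e [], t] ∨ ls = [t, .app e []]
  · obtain ⟨e, hke, t, h⟩ := hex
    exact .inr ⟨e, t, hke, h, collapse_of_absorbing hke h⟩
  · exact .inl (dif_neg hex)

@[simp] theorem norm_var (x : ℕ) : norm Th (.var x : Tm F) = .var x := by
  rw [norm]

theorem norm_app (k : F) (ls : List (Tm F)) :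
    norm Th (.app k ls) = collapse Th k (ls.map (norm Th)) := by
  rw [norm, List.map_attach_eq_pmap, List.pmap_eq_map]

theorem norm_app_cases (k : F) (ls : List (Tm F)) :
    norm Th (.app k ls) = .app k (ls.map (norm Th)) ∨
      ∃ e, (k, e) ∈ Th.pairs ∧ norm Th (.app k ls) = .app e [] := by
  rw [norm_app]
  rcases collapse_cases k (ls.map (norm Th)) with h | ⟨e, -, hke, -, h⟩
  exacts [.inl h, .inr ⟨e, hke, h⟩]

@[simp] theorem norm_app_nil (k : F) : norm Th (.app k [] : Tm F) = .app k [] := by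
  rw [norm_app, List.map_nil]
  rcases collapse_cases (Th := Th) k [] with h | ⟨_, _, _, h | h, -⟩
  exacts [h, by simp at h, by simp at h]

theorem absEq_norm (t : Tm F) : AbsEq Th t (norm Th t) := by
  induction t using Tm.induction with
  | var x => rw [norm_var]; exact .refl _
  | app k ls ih =>
    have hargs : AbsEq Th (.app k ls) (.app k (ls.map (norm Th))) :=
      .congr k (List.forall₂_map_right_iff.2 (List.forall₂_same.2 ih))
    rw [norm_app]
    rcases collapse_cases k (ls.map (norm Th)) with h | ⟨e, t, hke, hls | hls, h⟩ <;>
      rw [h] <;> [exact hargs; exact hargs.trans (hls ▸ .absL t hke);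
        exact hargs.trans (hls ▸ .absR t hke)]

theorem norm_eq_of_absEq {s t : Tm F} (h : AbsEq Th s t) : norm Th s = norm Th t := by
  refine AbsEq.rec (motive_1 := fun s t _ => norm Th s = norm Th t)
    (motive_2 := fun ss ts _ => ss.map (norm Th) = ts.map (norm Th))
    ?absL ?absR (fun _ => rfl) (fun _ ih => ih.symm) (fun _ _ ih₁ ih₂ => ih₁.trans ih₂)
    ?congr rfl ?cons h
  case absL =>
    intro f e t hfe
    rw [norm_app, List.map_cons, norm_app_nil]
    exact collapse_of_absorbing hfe (.inl rfl)
  case absR =>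
    intro f e t hfe
    rw [norm_app, List.map_cons, List.map_cons, norm_app_nil]
    exact collapse_of_absorbing hfe (.inr rfl)
  case congr =>
    intro k ss ts _ ih
    rw [norm_app, norm_app, ih]
  case cons =>
    intro s t ss ts _ _ ih₁ ih₂
    rw [List.map_cons, List.map_cons, ih₁, ih₂]

theorem absEq_iff_norm {s t : Tm F} : AbsEq Th s t ↔ norm Th s = norm Th t :=
  ⟨norm_eq_of_absEq, fun h => (absEq_norm s).trans (h ▸ (absEq_norm t).symm)⟩

end Normalization

section Inversion

variable {Sg : AbsSig F} {Th : AbsTh Sg}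

variable (Th) in
def TopStable (k : F) (ss : List (Tm F)) : Prop :=
  norm Th (.app k ss) = .app k (ss.map (norm Th))

theorem Rigid.topStable {k : F} (hk : Rigid Th k) (ss : List (Tm F)) : TopStable Th k ss := by
  rcases norm_app_cases (Th := Th) k ss with h | ⟨e, hke, -⟩
  exacts [h, absurd rfl (hk _ hke).1]

theorem Rigid.not_absEq_absorber {k f e : F} (hk : Rigid Th k) (hfe : (f, e) ∈ Th.pairs)
    (ls : List (Tm F)) : ¬ AbsEq Th (.app k ls) (.app e []) := by
  rw [absEq_iff_norm, hk.topStable, norm_app_nil]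
  intro h
  exact (hk _ hfe).2 (Tm.app.inj h).1

theorem not_absEq_app_var (k : F) (ls : List (Tm F)) (x : ℕ) :
    ¬ AbsEq Th (.app k ls) (.var x) := by
  rw [absEq_iff_norm, norm_var]
  rcases norm_app_cases (Th := Th) k ls with h | ⟨e, -, h⟩ <;> simp [h]

theorem topStable_absorbing {f e : F} (hfe : (f, e) ∈ Th.pairs) {s t : Tm F}
    (hs : ¬ AbsEq Th s (.app e [])) (ht : ¬ AbsEq Th t (.app e [])) : TopStable Th f [s, t] := by
  rw [TopStable, norm_app]
  rcases collapse_cases f ([s, t].map (norm Th)) with h | ⟨e', t', hfe', hst, -⟩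
  · exact h
  obtain rfl := snd_eq_of_mem_pairs Th hfe' hfe
  simp only [List.map_cons, List.map_nil, List.cons.injEq, and_true] at hst
  rcases hst with ⟨h, -⟩ | ⟨-, h⟩
  · exact absurd (absEq_iff_norm.2 (h.trans (norm_app_nil _).symm)) hs
  · exact absurd (absEq_iff_norm.2 (h.trans (norm_app_nil _).symm)) ht

theorem absEq_absorber_of_absorbing {f e : F} (hfe : (f, e) ∈ Th.pairs) {s t : Tm F}
    (h : AbsEq Th (.app f [s, t]) (.app e [])) :
    AbsEq Th s (.app e []) ∨ AbsEq Th t (.app e []) := by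
  by_contra! hst
  rw [absEq_iff_norm, topStable_absorbing hfe hst.1 hst.2, norm_app_nil] at h
  exact Th.ne _ hfe (Tm.app.inj h).1

theorem absEq_subst_app_cases {k : F} {ss : List (Tm F)} (hk : ∀ p ∈ Th.pairs, k ≠ p.2)
    (hss : TopStable Th k ss) {r : Tm F} {δ : ℕ → Tm F} (h : AbsEq Th (r.subst δ) (.app k ss)) :
    (∃ x, r = .var x) ∨
      ∃ rs, r = .app k rs ∧ List.Forall₂ (fun r s => AbsEq Th (r.subst δ) s) rs ss := by
  cases r with
  | var x => exact .inl ⟨x, rfl⟩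
  | app k' rs =>
    rw [absEq_iff_norm, hss, subst_app] at h
    rcases norm_app_cases k' (rs.map (Tm.subst δ)) with h' | ⟨e, hke, h'⟩ <;> rw [h'] at h
    · obtain ⟨rfl, hargs⟩ := Tm.app.inj h
      refine .inr ⟨rs, rfl, ?_⟩
      rw [List.map_map, ← List.forall₂_eq_eq_eq, List.forall₂_map_left_iff,
        List.forall₂_map_right_iff] at hargs
      exact hargs.imp fun _ _ => absEq_iff_norm.2
    · exact absurd (Tm.app.inj h).1.symm (hk _ hke)

end Inversion

section Generalization

variable {Sg : AbsSig F} {Th : AbsTh Sg}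

theorem moreGen_of_absEq_subst {r s : Tm F} (δ : ℕ → Tm F) (h : AbsEq Th (r.subst δ) s) :
    MoreGen Th r s := by
  classical
  refine ⟨fun z => if VarIn z r then δ z else .var z, ?_, ?_⟩
  · refine (finite_setOf_varIn r).subset fun z hz => ?_
    by_contra hzr
    exact hz (if_neg hzr)
  · rwa [subst_congr fun z hz => if_pos hz]

theorem moreGen_var (x : ℕ) (s : Tm F) : MoreGen Th (.var x) s :=
  moreGen_of_absEq_subst (fun _ => s) (by rw [subst_var]; exact .refl s)

theorem MoreGen.refl (r : Tm F) : MoreGen Th r r :=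
  moreGen_of_absEq_subst Tm.var (by rw [subst_var_eq]; exact .refl r)

theorem MoreGen.app_pair {r₁ r₂ s₁ s₂ : Tm F} (h₁ : MoreGen Th r₁ s₁) (h₂ : MoreGen Th r₂ s₂)
    (hd : ∀ z, VarIn z r₁ → ¬ VarIn z r₂) (k : F) :
    MoreGen Th (.app k [r₁, r₂]) (.app k [s₁, s₂]) := by
  classical
  obtain ⟨δ₁, -, h₁⟩ := h₁
  obtain ⟨δ₂, -, h₂⟩ := h₂
  refine moreGen_of_absEq_subst (fun z => if VarIn z r₁ then δ₁ z else δ₂ z) ?_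
  rw [subst_app, List.map_cons, List.map_cons, List.map_nil,
    subst_congr fun z hz => if_pos hz, subst_congr fun z hz => if_neg fun hz₁ => hd z hz₁ hz]
  exact .congr k (.cons h₁ (.cons h₂ .nil))

theorem Gen.app_pair {r₁ r₂ s₁ s₂ t₁ t₂ : Tm F} (h₁ : Gen Th r₁ s₁ t₁) (h₂ : Gen Th r₂ s₂ t₂)
    (hd : ∀ z, VarIn z r₁ → ¬ VarIn z r₂) (k : F) :
    Gen Th (.app k [r₁, r₂]) (.app k [s₁, s₂]) (.app k [t₁, t₂]) :=
  ⟨h₁.1.app_pair h₂.1 hd k, h₁.2.app_pair h₂.2 hd k⟩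

theorem Gen.symm {r s t : Tm F} (h : Gen Th r s t) : Gen Th r t s := ⟨h.2, h.1⟩

theorem not_moreGen_app_var (k : F) (ls : List (Tm F)) (x : ℕ) :
    ¬ MoreGen Th (.app k ls) (.var x) := by
  rintro ⟨δ, -, h⟩
  rw [subst_app] at h
  exact not_absEq_app_var _ _ _ h

theorem moreGen_app_pair_cases {k : F} {s₁ s₂ : Tm F} (hk : ∀ p ∈ Th.pairs, k ≠ p.2)
    (hs : TopStable Th k [s₁, s₂]) {r : Tm F} (h : MoreGen Th r (.app k [s₁, s₂])) :
    (∃ x, r = .var x) ∨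
      ∃ r₁ r₂, r = .app k [r₁, r₂] ∧ MoreGen Th r₁ s₁ ∧ MoreGen Th r₂ s₂ := by
  obtain ⟨δ, -, h⟩ := h
  rcases absEq_subst_app_cases hk hs h with hr | ⟨rs, rfl, hrs⟩
  · exact .inl hr
  obtain ⟨r₁, rs₁, h₁, hrs₁, rfl⟩ := List.forall₂_cons_right_iff.1 hrs
  obtain ⟨r₂, rs₂, h₂, hrs₂, rfl⟩ := List.forall₂_cons_right_iff.1 hrs₁
  obtain rfl := List.forall₂_nil_right_iff.1 hrs₂
  exact .inr ⟨r₁, r₂, rfl, moreGen_of_absEq_subst δ h₁, moreGen_of_absEq_subst δ h₂⟩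

theorem MoreGen.of_app_pair {k : F} {r₁ r₂ s₁ s₂ : Tm F} (hk : ∀ p ∈ Th.pairs, k ≠ p.2)
    (hs : TopStable Th k [s₁, s₂]) (h : MoreGen Th (.app k [r₁, r₂]) (.app k [s₁, s₂])) :
    MoreGen Th r₁ s₁ ∧ MoreGen Th r₂ s₂ := by
  rcases moreGen_app_pair_cases hk hs h with ⟨x, hx⟩ | ⟨r₁', r₂', hr, h₁, h₂⟩
  · cases hx
  · obtain ⟨rfl, rfl⟩ : r₁ = r₁' ∧ r₂ = r₂' := by simpa using hr
    exact ⟨h₁, h₂⟩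

theorem gen_app_pair_cases {k : F} (hk : Rigid Th k) {r s₁ s₂ t₁ t₂ : Tm F}
    (h : Gen Th r (.app k [s₁, s₂]) (.app k [t₁, t₂])) :
    (∃ x, r = .var x) ∨ ∃ r₁ r₂, r = .app k [r₁, r₂] ∧ Gen Th r₁ s₁ t₁ ∧ Gen Th r₂ s₂ t₂ := by
  have hk₂ : ∀ p ∈ Th.pairs, k ≠ p.2 := fun p hp => (hk p hp).2
  rcases moreGen_app_pair_cases hk₂ (hk.topStable _) h.1 with hr | ⟨r₁, r₂, rfl, hs₁, hs₂⟩
  · exact .inl hr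
  obtain ⟨ht₁, ht₂⟩ := MoreGen.of_app_pair hk₂ (hk.topStable _) h.2
  exact .inr ⟨r₁, r₂, rfl, ⟨hs₁, ht₁⟩, ⟨hs₂, ht₂⟩⟩

end Generalization

section MCSG

variable {Sg : AbsSig F} {Th : AbsTh Sg}

theorem IsAntichain.image2_app_pair {k : F} (hk : Rigid Th k) {A B : Set (Tm F)}
    (hA : IsAntichain (MoreGen Th) A) (hB : IsAntichain (MoreGen Th) B) :
    IsAntichain (MoreGen Th) (Set.image2 (fun r₁ r₂ => .app k [r₁, r₂]) A B) := by
  rintro _ ⟨a, ha, b, hb, rfl⟩ _ ⟨a', ha', b', hb', rfl⟩ hne hab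
  obtain ⟨h₁, h₂⟩ := MoreGen.of_app_pair (fun p hp => (hk p hp).2) (hk.topStable _) hab
  by_cases hea : a = a'
  · subst hea
    exact hB hb hb' (fun heb => hne (heb ▸ rfl)) h₂
  · exact hA ha ha' hea h₁

variable (Th) in
def IsLinearMCSG (M : Set (Tm F)) (s t : Tm F) : Prop :=
  (∀ r ∈ M, Linear r ∧ Gen Th r s t) ∧
  (∀ r, Linear r → Gen Th r s t → ∃ r' ∈ M, MoreGen Th r r') ∧
  IsAntichain (MoreGen Th) M

theorem IsLinearMCSG.symm {M : Set (Tm F)} {s t : Tm F} (h : IsLinearMCSG Th M s t) :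
    IsLinearMCSG Th M t s :=
  ⟨fun r hr => ⟨(h.1 r hr).1, (h.1 r hr).2.symm⟩, fun r hr hg => h.2.1 r hr hg.symm, h.2.2⟩

theorem IsLinearMCSG.nonempty {M : Set (Tm F)} {s t : Tm F} (h : IsLinearMCSG Th M s t) :
    M.Nonempty :=
  let ⟨r, hr, _⟩ := h.2.1 (.var 0) (.var 0) ⟨moreGen_var 0 s, moreGen_var 0 t⟩
  ⟨r, hr⟩

theorem IsLinearMCSG.image2_app_pair {k : F} (hk : Rigid Th k) {M₁ M₂ : Set (Tm F)}
    {s₁ s₂ t₁ t₂ : Tm F} (h₁ : IsLinearMCSG Th M₁ s₁ t₁) (h₂ : IsLinearMCSG Th M₂ s₂ t₂)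
    (hd : ∀ r₁ ∈ M₁, ∀ r₂ ∈ M₂, ∀ z, VarIn z r₁ → ¬ VarIn z r₂) :
    IsLinearMCSG Th (Set.image2 (fun r₁ r₂ => .app k [r₁, r₂]) M₁ M₂)
      (.app k [s₁, s₂]) (.app k [t₁, t₂]) := by
  refine ⟨?generalizes, ?complete, IsAntichain.image2_app_pair hk h₁.2.2 h₂.2.2⟩
  case generalizes =>
    rintro _ ⟨r₁, hr₁, r₂, hr₂, rfl⟩
    obtain ⟨hl₁, hg₁⟩ := h₁.1 r₁ hr₁
    obtain ⟨hl₂, hg₂⟩ := h₂.1 r₂ hr₂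
    have hd₁₂ := hd r₁ hr₁ r₂ hr₂
    exact ⟨linear_app_pair_iff.2 ⟨hl₁, hl₂, hd₁₂⟩, hg₁.app_pair hg₂ hd₁₂ k⟩
  case complete =>
    intro r hr hgen
    rcases gen_app_pair_cases hk hgen with ⟨x, rfl⟩ | ⟨r₁, r₂, rfl, hg₁, hg₂⟩
    · obtain ⟨r₁, hr₁⟩ := h₁.nonempty
      obtain ⟨r₂, hr₂⟩ := h₂.nonempty
      exact ⟨_, Set.mem_image2_of_mem hr₁ hr₂, moreGen_var x _⟩
    obtain ⟨hl₁, hl₂, hd'⟩ := linear_app_pair_iff.1 hr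
    obtain ⟨r₁', hr₁', hm₁⟩ := h₁.2.1 r₁ hl₁ hg₁
    obtain ⟨r₂', hr₂', hm₂⟩ := h₂.2.1 r₂ hl₂ hg₂
    exact ⟨_, Set.mem_image2_of_mem hr₁' hr₂', hm₁.app_pair hm₂ hd' k⟩

end MCSG

section Absorption

variable {Sg : AbsSig F} {Th : AbsTh Sg} {f e : F}

theorem moreGen_absorber_of_absorbing (hfe : (f, e) ∈ Th.pairs) {l₁ l₂ : Tm F}
    (h : MoreGen Th (.app f [l₁, l₂]) (.app e [])) :
    MoreGen Th l₁ (.app e []) ∨ MoreGen Th l₂ (.app e []) := by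
  obtain ⟨δ, -, h⟩ := h
  rw [subst_app, List.map_cons, List.map_cons, List.map_nil] at h
  exact (absEq_absorber_of_absorbing hfe h).imp (moreGen_of_absEq_subst δ)
    (moreGen_of_absEq_subst δ)

theorem eq_var_of_moreGen_absorber_of_rigid (hfe : (f, e) ∈ Th.pairs) {k : F} (hk : Rigid Th k)
    {q : Tm F} {ls : List (Tm F)} (he : MoreGen Th q (.app e [])) (hq : MoreGen Th q (.app k ls)) :
    ∃ x, q = .var x := by
  obtain ⟨δ, -, hδ⟩ := hq
  rcases absEq_subst_app_cases (fun p hp => (hk p hp).2) (hk.topStable _) hδ with hx | ⟨qs, rfl, -⟩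
  · exact hx
  obtain ⟨σ, -, hσ⟩ := he
  rw [subst_app] at hσ
  exact absurd hσ (hk.not_absEq_absorber hfe _)

theorem gen_absorbing_var_left (hfe : (f, e) ∈ Th.pairs) {u : ℕ} {c₁ c₂ : Tm F}
    (hu : ¬ VarIn u c₂) :
    Gen Th (.app f [.var u, c₂]) (.app e []) (.app f [c₁, c₂]) := by
  refine ⟨moreGen_of_absEq_subst (fun _ => .app e []) ?_, ?_⟩
  · rw [subst_app, List.map_cons, List.map_cons, List.map_nil, subst_var]
    exact .absL _ hfe
  · exact (moreGen_var u c₁).app_pair (.refl c₂) (fun z hz => (varIn_var_iff.1 hz) ▸ hu) f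

theorem gen_absorbing_var_right (hfe : (f, e) ∈ Th.pairs) {v : ℕ} {c₁ c₂ : Tm F}
    (hv : ¬ VarIn v c₁) :
    Gen Th (.app f [c₁, .var v]) (.app e []) (.app f [c₁, c₂]) := by
  refine ⟨moreGen_of_absEq_subst (fun _ => .app e []) ?_, ?_⟩
  · rw [subst_app, List.map_cons, List.map_cons, List.map_nil, subst_var]
    exact .absR _ hfe
  · exact (MoreGen.refl c₁).app_pair (moreGen_var v c₂)
      (fun z hz hzv => hv (varIn_var_iff.1 hzv ▸ hz)) f

theorem Linear.moreGen_of_gen_absorber (hfe : (f, e) ∈ Th.pairs) {k₁ k₂ : F}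
    (hk₁ : Rigid Th k₁) (hk₂ : Rigid Th k₂) {ls₁ ls₂ : List (Tm F)} {p : Tm F} (hp : Linear p)
    (hgen : Gen Th p (.app e []) (.app f [.app k₁ ls₁, .app k₂ ls₂])) (u v : ℕ) :
    MoreGen Th p (.app f [.var u, .app k₂ ls₂]) ∨ MoreGen Th p (.app f [.app k₁ ls₁, .var v]) := by
  have hs : TopStable Th f [.app k₁ ls₁, .app k₂ ls₂] :=
    topStable_absorbing hfe (hk₁.not_absEq_absorber hfe _) (hk₂.not_absEq_absorber hfe _)
  rcases moreGen_app_pair_cases (fun _ => ne_snd_of_mem_pairs Th hfe) hs hgen.2 with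
    ⟨x, rfl⟩ | ⟨l₁, l₂, rfl, h₁, h₂⟩
  · exact .inl (moreGen_var x _)
  obtain ⟨-, -, hd⟩ := linear_app_pair_iff.1 hp
  rcases moreGen_absorber_of_absorbing hfe hgen.1 with he₁ | he₂
  · obtain ⟨x, rfl⟩ := eq_var_of_moreGen_absorber_of_rigid hfe hk₁ he₁ h₁
    exact .inl ((moreGen_var x _).app_pair h₂ hd f)
  · obtain ⟨y, rfl⟩ := eq_var_of_moreGen_absorber_of_rigid hfe hk₂ he₂ h₂
    exact .inr (h₁.app_pair (moreGen_var y _) hd f)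

theorem isLinearMCSG_absorber_absorbing (hfe : (f, e) ∈ Th.pairs) {k₁ k₂ : F}
    (hk₁ : Rigid Th k₁) (hk₂ : Rigid Th k₂) {ls₁ ls₂ : List (Tm F)}
    (hc₁ : ∀ z, ¬ VarIn z (.app k₁ ls₁)) (hc₂ : ∀ z, ¬ VarIn z (.app k₂ ls₂)) (u v : ℕ) :
    IsLinearMCSG Th {.app f [.var u, .app k₂ ls₂], .app f [.app k₁ ls₁, .var v]}
      (.app e []) (.app f [.app k₁ ls₁, .app k₂ ls₂]) := by
  refine ⟨?generalizes, ?complete, ?antichain⟩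
  case generalizes =>
    rintro _ (rfl | rfl)
    · exact ⟨linear_app_pair_iff.2 ⟨.var u, .of_forall_not_varIn hc₂, fun z _ => hc₂ z⟩,
        gen_absorbing_var_left hfe (hc₂ u)⟩
    · exact ⟨linear_app_pair_iff.2
          ⟨.of_forall_not_varIn hc₁, .var v, fun z hz => absurd hz (hc₁ z)⟩,
        gen_absorbing_var_right hfe (hc₁ v)⟩
  case complete =>
    intro p hp hgen
    rcases hp.moreGen_of_gen_absorber hfe hk₁ hk₂ hgen u v with h | h
    exacts [⟨_, .inl rfl, h⟩, ⟨_, .inr rfl, h⟩]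
  case antichain =>
    have hf : ∀ p ∈ Th.pairs, f ≠ p.2 := fun _ => ne_snd_of_mem_pairs Th hfe
    have hvar (x : ℕ) : ¬ AbsEq Th (.var x) (.app e []) := fun h => not_absEq_app_var _ _ x h.symm
    refine Set.pairwise_pair.2 fun _ => ⟨fun h => ?_, fun h => ?_⟩
    · exact not_moreGen_app_var _ _ _
        (h.of_app_pair hf (topStable_absorbing hfe (hk₁.not_absEq_absorber hfe _) (hvar v))).2
    · exact not_moreGen_app_var _ _ _
        (h.of_app_pair hf (topStable_absorbing hfe (hvar u) (hk₂.not_absEq_absorber hfe _))).1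

end Absorption

theorem linear_mcsg_example_general {F : Type} {Sg : AbsSig F} (Th : AbsTh Sg)
    (f e g h a : F)
    (hfe : (f, e) ∈ Th.pairs)
    (hpure : ∀ p ∈ Th.pairs, g ≠ p.1 ∧ g ≠ p.2 ∧ h ≠ p.1 ∧ h ≠ p.2 ∧ a ≠ p.1 ∧ a ≠ p.2)
    (u1 u2 v1 v2 : ℕ)
    (h12 : u1 ≠ u2) (h14 : u1 ≠ v2)
    (h23 : u2 ≠ v1) (h34 : v1 ≠ v2)
    (s' t' L1 L2 L3 L4 : Tm F)
    (hs : s' = Tm.app g [Tm.app e [], Tm.app f [Tm.app a [], Tm.app h [Tm.app e []]]])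
    (ht : t' = Tm.app g [Tm.app f [Tm.app h [Tm.app e []], Tm.app a []], Tm.app e []])
    (hL1 : L1 = Tm.app g [Tm.app f [Tm.var u1, Tm.app a []],
                          Tm.app f [Tm.var u2, Tm.app h [Tm.app e []]]])
    (hL2 : L2 = Tm.app g [Tm.app f [Tm.var u1, Tm.app a []],
                          Tm.app f [Tm.app a [], Tm.var v2]])
    (hL3 : L3 = Tm.app g [Tm.app f [Tm.app h [Tm.app e []], Tm.var v1],
                          Tm.app f [Tm.var u2, Tm.app h [Tm.app e []]]])
    (hL4 : L4 = Tm.app g [Tm.app f [Tm.app h [Tm.app e []], Tm.var v1],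
                          Tm.app f [Tm.app a [], Tm.var v2]]) :
    (∀ r ∈ ({L1, L2, L3, L4} : Set (Tm F)), Linear r ∧ Gen Th r s' t') ∧
    (∀ r : Tm F, Linear r → Gen Th r s' t' →
        ∃ r' ∈ ({L1, L2, L3, L4} : Set (Tm F)), MoreGen Th r r') ∧
    (∀ r ∈ ({L1, L2, L3, L4} : Set (Tm F)), ∀ r' ∈ ({L1, L2, L3, L4} : Set (Tm F)),
        r ≠ r' → ¬ MoreGen Th r r') := by
  subst hs ht hL1 hL2 hL3 hL4
  have hg : Rigid Th g := fun p hp => ⟨(hpure p hp).1, (hpure p hp).2.1⟩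
  have hh : Rigid Th h := fun p hp => ⟨(hpure p hp).2.2.1, (hpure p hp).2.2.2.1⟩
  have ha : Rigid Th a := fun p hp => ⟨(hpure p hp).2.2.2.2.1, (hpure p hp).2.2.2.2.2⟩
  rw [show ({_, _, _, _} : Set (Tm F)) = Set.image2 (fun r₁ r₂ => .app g [r₁, r₂])
      {.app f [.var u1, .app a []], .app f [.app h [.app e []], .var v1]}
      {.app f [.var u2, .app h [.app e []]], .app f [.app a [], .var v2]} by
    simp only [Set.image2_insert_left, Set.image2_singleton_left, Set.image_insert_eq,
      Set.image_singleton, Set.insert_union, Set.singleton_union]]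
  exact IsLinearMCSG.image2_app_pair hg
    (isLinearMCSG_absorber_absorbing hfe hh ha (by simp) (by simp) u1 v1)
    (isLinearMCSG_absorber_absorbing hfe ha hh (by simp) (by simp) u2 v2).symm
    (by simp [h12, h14, h23.symm, h34])

/-- Example 5: the four listed linear terms form a minimal
complete set of linear `Abs`-generalizations of `g(ε_f, f(a, h(ε_f)))` and
`g(f(h(ε_f), a), ε_f)`. -/
theorem linear_mcsg_example {F : Type} {Sg : AbsSig F} (Th : AbsTh Sg)
    (f e g h a : F)
    (hfe : (f, e) ∈ Th.pairs)
    (hg : Sg.arity g = 2) (hh : Sg.arity h = 1) (ha : Sg.arity a = 0)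
    (hgh : g ≠ h) (hga : g ≠ a) (hha : h ≠ a) (hge : g ≠ e) (hhe : h ≠ e) (hae : a ≠ e)
    (hpure : ∀ p ∈ Th.pairs, g ≠ p.1 ∧ g ≠ p.2 ∧ h ≠ p.1 ∧ h ≠ p.2 ∧ a ≠ p.1 ∧ a ≠ p.2)
    (u1 u2 v1 v2 : ℕ)
    (h12 : u1 ≠ u2) (h13 : u1 ≠ v1) (h14 : u1 ≠ v2)
    (h23 : u2 ≠ v1) (h24 : u2 ≠ v2) (h34 : v1 ≠ v2)
    (s' t' L1 L2 L3 L4 : Tm F)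
    (hs : s' = Tm.app g [Tm.app e [], Tm.app f [Tm.app a [], Tm.app h [Tm.app e []]]])
    (ht : t' = Tm.app g [Tm.app f [Tm.app h [Tm.app e []], Tm.app a []], Tm.app e []])
    (hL1 : L1 = Tm.app g [Tm.app f [Tm.var u1, Tm.app a []],
                          Tm.app f [Tm.var u2, Tm.app h [Tm.app e []]]])
    (hL2 : L2 = Tm.app g [Tm.app f [Tm.var u1, Tm.app a []],
                          Tm.app f [Tm.app a [], Tm.var v2]])
    (hL3 : L3 = Tm.app g [Tm.app f [Tm.app h [Tm.app e []], Tm.var v1],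
                          Tm.app f [Tm.var u2, Tm.app h [Tm.app e []]]])
    (hL4 : L4 = Tm.app g [Tm.app f [Tm.app h [Tm.app e []], Tm.var v1],
                          Tm.app f [Tm.app a [], Tm.var v2]]) :
    (∀ r ∈ ({L1, L2, L3, L4} : Set (Tm F)), Linear r ∧ Gen Th r s' t') ∧
    (∀ r : Tm F, Linear r → Gen Th r s' t' →
        ∃ r' ∈ ({L1, L2, L3, L4} : Set (Tm F)), MoreGen Th r r') ∧
    (∀ r ∈ ({L1, L2, L3, L4} : Set (Tm F)), ∀ r' ∈ ({L1, L2, L3, L4} : Set (Tm F)),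
        r ≠ r' → ¬ MoreGen Th r r') :=
  linear_mcsg_example_general Th f e g h a hfe hpure u1 u2 v1 v2 h12 h14 h23 h34 s' t' L1 L2 L3 L4
    hs ht hL1 hL2 hL3 hL4

end AbsAU
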